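/- Explicit upper bound for the principal root of the Robin–Bessel equation: let n ≥ 2 and α ∈ [−1, 0], and suppose x ∈ (0, j_{n/2,1}) satisfies x·J_{n/2+1}(x)/J_{n/2}(x) = 1 + α. Then x² ≤ (1/2)(n+2)(n+4)(√(1 + 4(1+α)/(n+4)) − 1). -/

import Mathlib

/-- Bessel function of the first kind. -/
noncomputable def besselJ (ν x : ℝ) : ℝ :=
  ∑' k : ℕ, (-1 : ℝ) ^ k * (x / 2) ^ (ν + 2 * (k : ℝ)) /
    (Nat.factorial k * Real.Gamma (ν + k + 1))

/-- The first positive zero of the Bessel function `J ν`. -/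
noncomputable def besselJZero (ν : ℝ) : ℝ :=
  sInf {x : ℝ | 0 < x ∧ besselJ ν x = 0}

/-!
Write `J ν t = (t / 2) ^ ν * G ν (t ^ 2 / 4)` with the entire function
`G ν u = ∑ (-u) ^ k / (k! Γ(ν + k + 1))`. Termwise, `G ν' = -G (ν + 1)` and
`G ν u + u G (ν + 2) u = (ν + 1) G (ν + 1) u`, hence `(u ^ (ν + 1) G (ν + 1))' = u ^ ν G ν`.
Since `J ν` has no zero in `(0, j_{ν,1})`, `G ν > 0` on `(0, j_{ν,1}² / 4)`, and the derivative
identity propagates this positivity to every `G (ν + m)`. The recurrence then gives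
`G ν ≤ (ν + 1) G (ν + 1) ≤ (ν + 1) (ν + 2) G (ν + 2)`, and substituting this into
`x J_{ν+1}(x) / J_ν(x) = 2u G (ν + 1) / G ν = (2u / (ν + 1)) (1 + u G (ν + 2) / G ν)`
(`u = x² / 4`) is the Ismail–Siddiqui lower bound. For `ν = n / 2` it turns the equation into
`x⁴ + (n + 2)(n + 4) x² ≤ (1 + α)(n + 2)²(n + 4)`, a quadratic inequality in `x²`.
-/

open Set

theorem hasDerivAt_tsum_mul_pow {c : ℕ → ℝ} {u : ℝ} (hc : Summable fun k => c k * u ^ k)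
    (hc' : ∀ r, Summable fun k => ‖(k + 1) * c (k + 1) * r ^ k‖) :
    HasDerivAt (fun v => ∑' k, c k * v ^ k) (∑' k, (k + 1) * c (k + 1) * u ^ k) u := by
  set R := |u| + 1
  have hu : u ∈ Ioo (-R) R := abs_lt.mp (lt_add_one _)
  have hbound : Summable fun k : ℕ => ‖c k * (k * R ^ (k - 1))‖ := by
    rw [← summable_nat_add_iff 1]
    simpa [mul_comm, mul_left_comm, mul_assoc] using hc' R
  have hle : ∀ k, ∀ y ∈ Ioo (-R) R,
      ‖c k * (k * y ^ (k - 1))‖ ≤ ‖c k * (k * R ^ (k - 1))‖ := by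
    intro k y hy
    simp only [norm_mul, norm_pow]
    gcongr
    exact (abs_lt.mpr hy).le.trans (le_abs_self R)
  have hderiv := hasDerivAt_tsum_of_isPreconnected hbound isOpen_Ioo isPreconnected_Ioo
    (fun k y _ => (hasDerivAt_pow k y).const_mul (c k)) hle hu hc hu
  rw [(hbound.of_norm_bounded fun k => hle k u hu).tsum_eq_zero_add, Nat.cast_zero, zero_mul,
    mul_zero, zero_add] at hderiv
  simpa [mul_comm, mul_left_comm] using hderiv

open Nat in
noncomputable def besselCoeff (ν : ℝ) (k : ℕ) : ℝ :=
  (-1) ^ k / (k ! * Real.Gamma (ν + k + 1))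

noncomputable def besselG (ν u : ℝ) : ℝ :=
  ∑' k, besselCoeff ν k * u ^ k

section besselG

open Nat Real

variable {ν : ℝ}

theorem factorial_mul_Gamma_le (hν : 0 ≤ ν) (k : ℕ) :
    k ! * Gamma (ν + 1) ≤ Gamma (ν + k + 1) := by
  induction k with
  | zero => simp
  | succ k ih =>
    rw [factorial_succ, cast_mul, cast_succ, ← add_assoc,
      Gamma_add_one (s := ν + k + 1) (by positivity), mul_assoc]
    gcongr
    linarith

theorem norm_besselCoeff_mul_pow_le (hν : 0 ≤ ν) (k : ℕ) (r : ℝ) :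
    ‖besselCoeff ν k * r ^ k‖ ≤ (Gamma (ν + 1))⁻¹ * (|r| ^ k / k !) := by
  have hΓ : 0 < Gamma (ν + 1) := Gamma_pos_of_pos (by positivity)
  have hk : (1 : ℝ) ≤ k ! := mod_cast k.factorial_pos
  rw [besselCoeff, norm_mul, norm_div, norm_pow, norm_neg, norm_one, one_pow, norm_pow,
    Real.norm_eq_abs, Real.norm_eq_abs, abs_of_pos (by positivity), div_mul_eq_mul_div, one_mul,
    inv_mul_eq_div, div_div]
  gcongr
  exact (le_mul_of_one_le_left hΓ.le hk).trans (factorial_mul_Gamma_le hν k)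

theorem summable_norm_besselCoeff_mul_pow (hν : 0 ≤ ν) (r : ℝ) :
    Summable fun k => ‖besselCoeff ν k * r ^ k‖ :=
  .of_nonneg_of_le (fun _ => norm_nonneg _) (norm_besselCoeff_mul_pow_le hν · r)
    ((summable_pow_div_factorial |r|).mul_left _)

theorem besselCoeff_eq_mul_besselCoeff_add_one (k : ℕ) :
    besselCoeff ν k = (ν + k + 1) * besselCoeff (ν + 1) k := by
  rcases eq_or_ne (ν + k + 1) 0 with hs | hs
  · -- both sides vanish, as `Gamma 0 = 0`
    simp [besselCoeff, hs]
  · rw [besselCoeff, besselCoeff, add_right_comm ν 1, Gamma_add_one hs, mul_div_assoc',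
      mul_left_comm, mul_div_mul_left _ _ hs]

theorem succ_mul_besselCoeff_succ (k : ℕ) :
    (k + 1) * besselCoeff ν (k + 1) = -besselCoeff (ν + 1) k := by
  have hk : (k : ℝ) + 1 ≠ 0 := k.cast_add_one_ne_zero
  rw [besselCoeff, besselCoeff, factorial_succ, pow_succ, cast_mul, cast_succ, ← add_assoc,
    add_right_comm ν 1, mul_div_assoc', mul_assoc ((k : ℝ) + 1), mul_div_mul_left _ _ hk]
  ring

theorem besselG_zero : besselG ν 0 = (Gamma (ν + 1))⁻¹ := by
  rw [besselG, tsum_eq_single 0 fun k hk => by simp [hk]]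
  simp [besselCoeff]

theorem hasSum_besselG (hν : 0 ≤ ν) (u : ℝ) :
    HasSum (fun k => besselCoeff ν k * u ^ k) (besselG ν u) :=
  (summable_norm_besselCoeff_mul_pow hν u).of_norm.hasSum

theorem hasDerivAt_besselG (hν : 0 ≤ ν) (u : ℝ) :
    HasDerivAt (besselG ν) (-besselG (ν + 1) u) u := by
  have hd := hasDerivAt_tsum_mul_pow (hasSum_besselG hν u).summable fun r => by
    simpa only [succ_mul_besselCoeff_succ, neg_mul, norm_neg]
      using summable_norm_besselCoeff_mul_pow (ν := ν + 1) (by positivity) r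
  simp only [succ_mul_besselCoeff_succ, neg_mul, tsum_neg] at hd
  exact hd

theorem continuous_besselG (hν : 0 ≤ ν) : Continuous (besselG ν) :=
  continuous_iff_continuousAt.2 fun u => (hasDerivAt_besselG hν u).continuousAt

theorem besselG_add_mul_besselG_add_two (hν : 0 ≤ ν) (u : ℝ) :
    besselG ν u + u * besselG (ν + 2) u = (ν + 1) * besselG (ν + 1) u := by
  have hshift : HasSum (fun k : ℕ => k * besselCoeff (ν + 1) k * u ^ k)
      (-(u * besselG (ν + 2) u)) := by
    refine (hasSum_nat_add_iff' 1).mp ?_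
    simp only [Finset.range_one, Finset.sum_singleton, cast_zero, zero_mul, sub_zero]
    refine ((hasSum_besselG (ν := ν + 2) (by positivity) u).mul_left u).neg.congr_fun fun k => ?_
    rw [cast_succ, succ_mul_besselCoeff_succ, add_assoc, one_add_one_eq_two]
    ring
  have hsum : HasSum (fun k => besselCoeff ν k * u ^ k)
      ((ν + 1) * besselG (ν + 1) u + -(u * besselG (ν + 2) u)) :=
    (((hasSum_besselG (by positivity) u).mul_left (ν + 1)).add hshift).congr_fun fun k => by
      rw [besselCoeff_eq_mul_besselCoeff_add_one]
      ring
  linarith [(hasSum_besselG hν u).unique hsum]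

theorem hasDerivAt_rpow_mul_besselG (hν : 0 ≤ ν) {u : ℝ} (hu : 0 < u) :
    HasDerivAt (fun w => w ^ (ν + 1) * besselG (ν + 1) w) (u ^ ν * besselG ν u) u := by
  have hpow : HasDerivAt (fun w : ℝ => w ^ (ν + 1)) ((ν + 1) * u ^ ν) u := by
    simpa using hasDerivAt_rpow_const (x := u) (p := ν + 1) (Or.inl hu.ne')
  refine (hpow.mul (hasDerivAt_besselG (ν := ν + 1) (by positivity) u)).congr_deriv ?_
  rw [rpow_add_one hu.ne', add_assoc, one_add_one_eq_two,
    eq_sub_of_add_eq (besselG_add_mul_besselG_add_two hν u)]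
  ring

theorem besselG_add_one_pos_of_pos (hν : 0 ≤ ν) {b : ℝ}
    (h : ∀ w ∈ Ioo 0 b, 0 < besselG ν w) : ∀ u ∈ Ioo 0 b, 0 < besselG (ν + 1) u := by
  intro u hu
  let F := fun w : ℝ => w ^ (ν + 1) * besselG (ν + 1) w
  have hF : ContinuousOn F (Icc 0 u) :=
    ((continuous_id.rpow_const fun _ => Or.inr (by positivity)).mul
      (continuous_besselG (by positivity))).continuousOn
  obtain ⟨w, hw, hslope⟩ :=
    exists_hasDerivAt_eq_slope F (fun w => w ^ ν * besselG ν w) hu.1 hF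
      fun w hw => hasDerivAt_rpow_mul_besselG hν hw.1
  have hFu : 0 < F u / u := by
    have hF0 : F 0 = 0 := by simp [F, zero_rpow (by positivity : ν + 1 ≠ 0)]
    rw [hF0, sub_zero, sub_zero] at hslope
    rw [← hslope]
    exact mul_pos (rpow_pos_of_pos hw.1 ν) (h w ⟨hw.1, hw.2.trans hu.2⟩)
  exact pos_of_mul_pos_right ((div_pos_iff_of_pos_right hu.1).mp hFu) (rpow_nonneg hu.1.le _)

theorem besselG_add_nat_pos_of_pos (hν : 0 ≤ ν) {b : ℝ}
    (h : ∀ w ∈ Ioo 0 b, 0 < besselG ν w) (m : ℕ) :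
    ∀ u ∈ Ioo 0 b, 0 < besselG (ν + m) u := by
  induction m with
  | zero => simpa using h
  | succ m ih => simpa [add_assoc] using besselG_add_one_pos_of_pos (by positivity) ih

theorem besselG_le_mul_besselG_add_one (hν : 0 ≤ ν) {u : ℝ} (hu : 0 ≤ u)
    (h : 0 ≤ besselG (ν + 2) u) : besselG ν u ≤ (ν + 1) * besselG (ν + 1) u := by
  linarith [besselG_add_mul_besselG_add_two hν u, mul_nonneg hu h]

end besselG

section besselJ

open Real

variable {ν : ℝ}

theorem besselJ_eq_rpow_mul_besselG {t : ℝ} (ht : 0 < t) :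
    besselJ ν t = (t / 2) ^ ν * besselG ν (t ^ 2 / 4) := by
  rw [besselJ, besselG, ← tsum_mul_left]
  refine tsum_congr fun k => ?_
  rw [rpow_add (by positivity), show (2 : ℝ) * k = ((2 * k : ℕ) : ℝ) by push_cast; ring,
    rpow_natCast, pow_mul, besselCoeff]
  ring

theorem besselJ_ne_zero_of_mem_Ioo {t : ℝ} (ht : t ∈ Ioo 0 (besselJZero ν)) :
    besselJ ν t ≠ 0 := fun h =>
  ht.2.not_ge (csInf_le ⟨0, fun _ hy => hy.1.le⟩ ⟨ht.1, h⟩)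

theorem besselG_pos_of_mem_Ico (hν : 0 ≤ ν) {u : ℝ}
    (hu : u ∈ Ico 0 (besselJZero ν ^ 2 / 4)) : 0 < besselG ν u := by
  by_contra! hneg
  have hg0 : 0 < besselG ν 0 := besselG_zero ▸ inv_pos.2 (Gamma_pos_of_pos (by positivity))
  obtain ⟨w, hw, hgw⟩ :=
    intermediate_value_Icc' hu.1 (continuous_besselG hν).continuousOn ⟨hneg, hg0.le⟩
  have hw0 : 0 < w := hw.1.lt_of_ne (by rintro rfl; exact hg0.ne' hgw)
  have hj : 0 ≤ besselJZero ν := sInf_nonneg fun _ hy => hy.1.le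
  have htw : (2 * √w) ^ 2 = 4 * w := by rw [mul_pow, sq_sqrt hw0.le]; norm_num
  have ht : 2 * √w ∈ Ioo 0 (besselJZero ν) :=
    ⟨by positivity, lt_of_pow_lt_pow_left₀ 2 hj (by linarith [hw.2, hu.2])⟩
  apply besselJ_ne_zero_of_mem_Ioo ht
  rw [besselJ_eq_rpow_mul_besselG ht.1, htw, mul_div_cancel_left₀ _ four_ne_zero, hgw, mul_zero]

theorem mul_besselJ_add_one_div_besselJ {x : ℝ} (hx : 0 < x) :
    x * besselJ (ν + 1) x / besselJ ν x =
      x ^ 2 / 2 * besselG (ν + 1) (x ^ 2 / 4) / besselG ν (x ^ 2 / 4) := by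
  have h : (x / 2) ^ ν ≠ 0 := by positivity
  rw [besselJ_eq_rpow_mul_besselG hx, besselJ_eq_rpow_mul_besselG hx, rpow_add_one (by positivity)]
  field_simp

theorem sq_div_mul_le_mul_besselJ_add_one_div_besselJ (hν : 0 ≤ ν) {x : ℝ}
    (hx : x ∈ Ioo 0 (besselJZero ν)) :
    x ^ 2 / (2 * ν + 2) * (1 + x ^ 2 / ((2 * ν + 2) * (2 * ν + 4))) ≤
      x * besselJ (ν + 1) x / besselJ ν x := by
  obtain ⟨hx0, hxj⟩ := hx
  have hu : x ^ 2 / 4 ∈ Ioo 0 (besselJZero ν ^ 2 / 4) := ⟨by positivity, by gcongr⟩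
  set u := x ^ 2 / 4 with hu_def
  have hpos := besselG_add_nat_pos_of_pos hν fun w hw =>
    besselG_pos_of_mem_Ico hν (Ioo_subset_Ico_self hw)
  have hg0 : 0 < besselG ν u := by simpa using hpos 0 u hu
  have hg2 : 0 < besselG (ν + 2) u := by simpa using hpos 2 u hu
  have hg3 : 0 < besselG (ν + 1 + 2) u := by
    simpa [add_assoc, show (1 : ℝ) + 2 = 3 by norm_num] using hpos 3 u hu
  have h02 : besselG ν u / ((ν + 1) * (ν + 2)) ≤ besselG (ν + 2) u := by
    have h12 := besselG_le_mul_besselG_add_one (by positivity) hu.1.le hg3.le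
    rw [div_le_iff₀' (by positivity : 0 < (ν + 1) * (ν + 2))]
    calc besselG ν u ≤ (ν + 1) * besselG (ν + 1) u :=
          besselG_le_mul_besselG_add_one hν hu.1.le hg2.le
      _ ≤ (ν + 1) * ((ν + 1 + 1) * besselG (ν + 1 + 1) u) := by gcongr
      _ = (ν + 1) * (ν + 2) * besselG (ν + 2) u := by ring_nf
  rw [mul_besselJ_add_one_div_besselJ hx0, le_div_iff₀ hg0]
  calc x ^ 2 / (2 * ν + 2) * (1 + x ^ 2 / ((2 * ν + 2) * (2 * ν + 4))) * besselG ν u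
      = x ^ 2 / (2 * (ν + 1)) * (besselG ν u + u * (besselG ν u / ((ν + 1) * (ν + 2)))) := by
        rw [hu_def]
        field_simp
        ring
    _ ≤ x ^ 2 / (2 * (ν + 1)) * (besselG ν u + u * besselG (ν + 2) u) := by gcongr
    _ = x ^ 2 / 2 * besselG (ν + 1) u := by
        rw [besselG_add_mul_besselG_add_two hν]
        field_simp

end besselJ

theorem le_half_mul_sqrt_sub_one_of_sq_add_mul_le {y B c : ℝ} (hB : 0 < B)
    (h : y ^ 2 + B * y ≤ c) : y ≤ B / 2 * (√(1 + 4 * c / B ^ 2) - 1) := by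
  have hroot : (2 * y + B) / B ≤ √(1 + 4 * c / B ^ 2) := by
    apply Real.le_sqrt_of_sq_le
    rw [div_pow, div_le_iff₀ (by positivity)]
    field_simp
    nlinarith
  rw [div_le_iff₀ hB] at hroot
  nlinarith

theorem principal_root_upper_bound_general (n : ℕ) (α : ℝ) (x : ℝ)
    (hx : x ∈ Set.Ioo 0 (besselJZero ((n : ℝ) / 2)))
    (heq : x * besselJ ((n : ℝ) / 2 + 1) x / besselJ ((n : ℝ) / 2) x = 1 + α) :
    x ^ 2 ≤ (1 / 2) * (n + 2) * (n + 4) * (Real.sqrt (1 + 4 * (1 + α) / (n + 4)) - 1) := by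
  have hbound := sq_div_mul_le_mul_besselJ_add_one_div_besselJ (by positivity) hx
  rw [heq, show (2 : ℝ) * (n / 2) + 2 = n + 2 by ring,
    show (2 : ℝ) * (n / 2) + 4 = n + 4 by ring] at hbound
  have hquad : (x ^ 2) ^ 2 + (n + 2) * (n + 4) * x ^ 2 ≤ (1 + α) * (n + 2) ^ 2 * (n + 4) :=
    calc (x ^ 2) ^ 2 + (n + 2) * (n + 4) * x ^ 2
        = x ^ 2 / (n + 2) * (1 + x ^ 2 / ((n + 2) * (n + 4))) * ((n + 2) ^ 2 * (n + 4)) := by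
          field_simp
          ring
      _ ≤ (1 + α) * ((n + 2) ^ 2 * (n + 4)) := by gcongr
      _ = (1 + α) * (n + 2) ^ 2 * (n + 4) := by ring
  convert le_half_mul_sqrt_sub_one_of_sq_add_mul_le (by positivity) hquad using 3
  · ring
  · field_simp

theorem principal_root_upper_bound (n : ℕ) (hn : 2 ≤ n) (α : ℝ)
    (hα : α ∈ Set.Icc (-1 : ℝ) 0) (x : ℝ)
    (hx : x ∈ Set.Ioo 0 (besselJZero ((n : ℝ) / 2)))
    (heq : x * besselJ ((n : ℝ) / 2 + 1) x / besselJ ((n : ℝ) / 2) x = 1 + α) :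
    x ^ 2 ≤ (1 / 2) * (n + 2) * (n + 4) * (Real.sqrt (1 + 4 * (1 + α) / (n + 4)) - 1) :=
  principal_root_upper_bound_general n α x hx heq
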